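/- Let A and B be m×n complex matrices and E = B − A. Define α₁ := ‖A†‖₂²(‖A†E‖_F² − ‖A†EB†B‖_F²) + ‖B†‖₂²(‖EB†‖_F² − ‖AA†EB†‖_F²) and α₂ := ‖A†‖₂²(‖EA†‖_F² − ‖BB†EA†‖_F²) + ‖B†‖₂²(‖B†E‖_F² − ‖B†EA†A‖_F²). Then ‖B† − A†‖_F² ≤ min{α₁ + ‖B†EA†‖_F², α₂ + ‖A†EB†‖_F²}. -/

import Mathlib

open Matrix

/-- The square of the Frobenius norm of a complex matrix. -/
noncomputable def frobSq {α β : Type*} [Fintype α] [Fintype β] (M : Matrix α β ℂ) : ℝ :=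
  ∑ i, ∑ j, ‖M i j‖ ^ 2

/-- The spectral norm (ℓ²-operator norm) of a complex matrix. -/
noncomputable def spec {α β : Type*} [Fintype α] [Fintype β] [DecidableEq β]
    (M : Matrix α β ℂ) : ℝ :=
  ‖LinearMap.toContinuousLinearMap (Matrix.toEuclideanLin M)‖

/-- `X` is the Moore–Penrose inverse of `M` (the four Penrose equations). -/
def IsMoorePenrose {α β : Type*} [Fintype α] [Fintype β]
    (M : Matrix α β ℂ) (X : Matrix β α ℂ) : Prop :=
  M * X * M = M ∧ X * M * X = X ∧ (M * X)ᴴ = M * X ∧ (X * M)ᴴ = X * M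

/-!
Write `E = B - A`, `P = A A†` and `Q = B† B`. Then
`B† - A† = B† (1 - P) + B† (A - B) A† + (Q - 1) A†`,
and the three summands are pairwise orthogonal for the Frobenius inner product
`(X, Y) ↦ re tr (Xᴴ Y)`, because `A† (1 - P) = 0` and `B†ᴴ (Q - 1) = 0`; so their squared
norms add. Since `B† = B† B†ᴴ Bᴴ` and `Aᴴ (1 - P) = 0`, the first summand equals
`B† ((1 - P) E B†)ᴴ`, whose squared norm is at most `‖B†‖₂² ‖(1 - P) E B†‖_F²`, and
`‖(1 - P) X‖_F² = ‖X‖_F² - ‖P X‖_F²` for the orthogonal projection `P`. Up to sign, the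
third summand is the conjugate transpose of one of the same shape, for the pairs `(Bᴴ, B†ᴴ)`
and `(Aᴴ, A†ᴴ)`.
This gives the first bound; the second is the first applied to `Aᴴ` and `Bᴴ`.
-/

open scoped Matrix.Norms.L2Operator

section Frobenius

variable {α β γ : Type*} [Fintype α] [Fintype β] [Fintype γ]

lemma frobSq_eq_re_trace (M : Matrix α β ℂ) : frobSq M = (Mᴴ * M).trace.re := by
  simp only [frobSq, trace, diag, mul_apply, conjTranspose_apply, Complex.re_sum,
    RCLike.star_def, Complex.conj_mul', ← Complex.ofReal_pow, Complex.ofReal_re]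
  exact Finset.sum_comm

lemma frobSq_conjTranspose (M : Matrix α β ℂ) : frobSq Mᴴ = frobSq M := by
  simp only [frobSq, conjTranspose_apply, norm_star]
  exact Finset.sum_comm

lemma frobSq_neg (M : Matrix α β ℂ) : frobSq (-M) = frobSq M := by
  simp [frobSq]

lemma frobSq_add (X Y : Matrix α β ℂ) :
    frobSq (X + Y) = frobSq X + frobSq Y + 2 * (Xᴴ * Y).trace.re := by
  have hswap : (Yᴴ * X).trace = star (Xᴴ * Y).trace := by
    rw [← trace_conjTranspose, conjTranspose_mul, conjTranspose_conjTranspose]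
  simp only [frobSq_eq_re_trace, conjTranspose_add, Matrix.add_mul, Matrix.mul_add, trace_add,
    Complex.add_re, hswap, Complex.star_def, Complex.conj_re]
  ring

lemma frobSq_add_of_trace_eq_zero {X Y : Matrix α β ℂ} (h : (Xᴴ * Y).trace = 0) :
    frobSq (X + Y) = frobSq X + frobSq Y := by
  simp [frobSq_add, h]

lemma frobSq_add_add_of_trace_eq_zero {X Y Z : Matrix α β ℂ} (h₁₂ : (Xᴴ * Y).trace = 0)
    (h₁₃ : (Xᴴ * Z).trace = 0) (h₂₃ : (Yᴴ * Z).trace = 0) :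
    frobSq (X + Y + Z) = frobSq X + frobSq Y + frobSq Z := by
  rw [frobSq_add_of_trace_eq_zero, frobSq_add_of_trace_eq_zero h₁₂]
  rw [conjTranspose_add, Matrix.add_mul, trace_add, h₁₃, h₂₃, add_zero]

lemma frobSq_one_sub_mul [DecidableEq α] {P : Matrix α α ℂ} (hP : IsStarProjection P)
    (X : Matrix α β ℂ) : frobSq ((1 - P) * X) = frobSq X - frobSq (P * X) := by
  have horth : ((P * X)ᴴ * ((1 - P) * X)).trace = 0 := by
    rw [conjTranspose_mul, hP.isSelfAdjoint.isHermitian.eq, Matrix.mul_assoc, ← Matrix.mul_assoc P,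
      hP.mul_one_sub_self, Matrix.zero_mul, Matrix.mul_zero, trace_zero]
  have := frobSq_add_of_trace_eq_zero horth
  rw [← Matrix.add_mul, add_sub_cancel, Matrix.one_mul] at this
  linarith

lemma frobSq_mul_one_sub [DecidableEq β] {P : Matrix β β ℂ} (hP : IsStarProjection P)
    (X : Matrix α β ℂ) : frobSq (X * (1 - P)) = frobSq X - frobSq (X * P) := by
  have hPh : Pᴴ = P := hP.isSelfAdjoint.isHermitian.eq
  rw [← frobSq_conjTranspose, conjTranspose_mul, conjTranspose_sub, conjTranspose_one, hPh,
    frobSq_one_sub_mul hP, frobSq_conjTranspose, ← frobSq_conjTranspose (X * P),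
    conjTranspose_mul, hPh]

-- `spec M` is definitionally the norm `‖M‖` of `Matrix.Norms.L2Operator`.
lemma spec_conjTranspose [DecidableEq α] [DecidableEq β] (M : Matrix α β ℂ) :
    spec Mᴴ = spec M :=
  l2_opNorm_conjTranspose M

lemma frobSq_mul_le [DecidableEq β] (M : Matrix α β ℂ) (X : Matrix β γ ℂ) :
    frobSq (M * X) ≤ spec M ^ 2 * frobSq X := by
  have hcol (j : γ) : ∑ i, ‖(M * X) i j‖ ^ 2 ≤ spec M ^ 2 * ∑ k, ‖X k j‖ ^ 2 := by
    have h := pow_le_pow_left₀ (norm_nonneg _)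
      (l2_opNorm_mulVec M ((EuclideanSpace.equiv β ℂ).symm (fun k => X k j))) 2
    rw [mul_pow, EuclideanSpace.norm_sq_eq, EuclideanSpace.norm_sq_eq] at h
    exact h
  calc frobSq (M * X) = ∑ j, ∑ i, ‖(M * X) i j‖ ^ 2 := Finset.sum_comm
    _ ≤ ∑ j, spec M ^ 2 * ∑ k, ‖X k j‖ ^ 2 := Finset.sum_le_sum fun j _ => hcol j
    _ = spec M ^ 2 * frobSq X := by rw [← Finset.mul_sum, frobSq, Finset.sum_comm]

end Frobenius

namespace IsMoorePenrose

variable {α β : Type*} [Fintype α] [Fintype β] {M : Matrix α β ℂ} {X : Matrix β α ℂ}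

lemma symm (h : IsMoorePenrose M X) : IsMoorePenrose X M :=
  ⟨h.2.1, h.1, h.2.2.2, h.2.2.1⟩

lemma conjTranspose (h : IsMoorePenrose M X) : IsMoorePenrose Mᴴ Xᴴ := by
  refine ⟨?_, ?_, ?_, ?_⟩ <;>
    simp only [← Matrix.conjTranspose_mul, conjTranspose_conjTranspose, ← Matrix.mul_assoc]
  exacts [by rw [h.1], by rw [h.2.1], h.2.2.2.symm, h.2.2.1.symm]

lemma isStarProjection_mul [DecidableEq α] (h : IsMoorePenrose M X) :
    IsStarProjection (M * X) where
  isIdempotentElem := by rw [IsIdempotentElem, ← Matrix.mul_assoc, h.1]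
  isSelfAdjoint := h.2.2.1

lemma pinv_mul_one_sub [DecidableEq α] (h : IsMoorePenrose M X) : X * (1 - M * X) = 0 := by
  rw [Matrix.mul_sub, Matrix.mul_one, ← Matrix.mul_assoc, h.2.1, sub_self]

lemma conjTranspose_mul_one_sub [DecidableEq α] (h : IsMoorePenrose M X) :
    Mᴴ * (1 - M * X) = 0 := by
  have h' : (1 - M * X) * M = 0 := by rw [Matrix.sub_mul, Matrix.one_mul, h.1, sub_self]
  rw [← conjTranspose_conjTranspose (1 - M * X), ← Matrix.conjTranspose_mul, conjTranspose_sub,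
    conjTranspose_one, h.2.2.1, h', conjTranspose_zero]

lemma pinv_mul_conjTranspose_mul_conjTranspose (h : IsMoorePenrose M X) : X * Xᴴ * Mᴴ = X := by
  rw [Matrix.mul_assoc, ← Matrix.conjTranspose_mul, h.2.2.1, ← Matrix.mul_assoc, h.2.1]

end IsMoorePenrose

section PinvSub

variable {α β : Type*} [Fintype α] [Fintype β] {A B : Matrix α β ℂ} {a b : Matrix β α ℂ}

lemma frobSq_pinv_mul_one_sub_le [DecidableEq α]
    (hA : IsMoorePenrose A a) (hB : IsMoorePenrose B b) :
    frobSq (b * (1 - A * a)) ≤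
      spec b ^ 2 * (frobSq ((B - A) * b) - frobSq (A * a * (B - A) * b)) := by
  have hfactor : b * (1 - A * a) = b * ((1 - A * a) * ((B - A) * b))ᴴ := by
    rw [Matrix.conjTranspose_mul,
      hA.isStarProjection_mul.one_sub.isSelfAdjoint.isHermitian.eq, Matrix.conjTranspose_mul,
      Matrix.conjTranspose_sub, Matrix.mul_assoc, Matrix.sub_mul,
      hA.conjTranspose_mul_one_sub, sub_zero, ← Matrix.mul_assoc, ← Matrix.mul_assoc,
      hB.pinv_mul_conjTranspose_mul_conjTranspose]
  calc frobSq (b * (1 - A * a))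
      ≤ spec b ^ 2 * frobSq ((1 - A * a) * ((B - A) * b)) := by
        rw [hfactor, ← frobSq_conjTranspose ((1 - A * a) * _)]
        exact frobSq_mul_le _ _
    _ = spec b ^ 2 * (frobSq ((B - A) * b) - frobSq (A * a * (B - A) * b)) := by
        rw [frobSq_one_sub_mul hA.isStarProjection_mul, Matrix.mul_assoc (A * a)]

lemma frobSq_pinv_sub_pinv_le [DecidableEq α] [DecidableEq β]
    (hA : IsMoorePenrose A a) (hB : IsMoorePenrose B b) :
    frobSq (b - a) ≤
      spec a ^ 2 * (frobSq (a * (B - A)) - frobSq (a * (B - A) * b * B))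
        + spec b ^ 2 * (frobSq ((B - A) * b) - frobSq (A * a * (B - A) * b))
        + frobSq (b * (B - A) * a) := by
  have hsplit : b - a = b * (1 - A * a) + b * (A - B) * a + (b * B - 1) * a := by
    simp only [Matrix.mul_sub, Matrix.sub_mul, Matrix.mul_one, Matrix.one_mul, Matrix.mul_assoc]
    abel
  have hbB : bᴴ * (b * B - 1) = 0 := by
    rw [← neg_sub, Matrix.mul_neg, hB.symm.conjTranspose_mul_one_sub, neg_zero]
  have h₁₂ : ((b * (1 - A * a))ᴴ * (b * (A - B) * a)).trace = 0 := by
    rw [trace_mul_comm, Matrix.conjTranspose_mul,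
      hA.isStarProjection_mul.one_sub.isSelfAdjoint.isHermitian.eq, Matrix.mul_assoc,
      ← Matrix.mul_assoc a, hA.pinv_mul_one_sub, Matrix.zero_mul, Matrix.mul_zero, trace_zero]
  have h₁₃ : ((b * (1 - A * a))ᴴ * ((b * B - 1) * a)).trace = 0 := by
    rw [Matrix.conjTranspose_mul, Matrix.mul_assoc, ← Matrix.mul_assoc bᴴ, hbB, Matrix.zero_mul,
      Matrix.mul_zero, trace_zero]
  have h₂₃ : ((b * (A - B) * a)ᴴ * ((b * B - 1) * a)).trace = 0 := by
    rw [Matrix.conjTranspose_mul, Matrix.conjTranspose_mul, Matrix.mul_assoc, Matrix.mul_assoc,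
      ← Matrix.mul_assoc bᴴ, hbB, Matrix.zero_mul, Matrix.mul_zero, Matrix.mul_zero, trace_zero]
  have h₃ : frobSq ((b * B - 1) * a) = frobSq (aᴴ * (1 - (b * B)ᴴ)) := by
    rw [← frobSq_conjTranspose, Matrix.conjTranspose_mul, conjTranspose_sub, conjTranspose_one,
      ← neg_sub, Matrix.mul_neg, frobSq_neg]
  have h₁le := frobSq_pinv_mul_one_sub_le hA hB
  have h₃le := frobSq_pinv_mul_one_sub_le hB.conjTranspose hA.conjTranspose
  simp only [← conjTranspose_sub, ← Matrix.conjTranspose_mul, frobSq_conjTranspose,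
    spec_conjTranspose] at h₃le
  rw [hsplit, frobSq_add_add_of_trace_eq_zero h₁₂ h₁₃ h₂₃, h₃]
  simp only [← neg_sub B A, Matrix.mul_neg, Matrix.neg_mul, frobSq_neg, Matrix.mul_assoc]
    at h₁le h₃le ⊢
  linarith

end PinvSub

theorem stmt2 {m n : ℕ}
    (A B : Matrix (Fin m) (Fin n) ℂ)
    (Adag Bdag : Matrix (Fin n) (Fin m) ℂ)
    (hA : IsMoorePenrose A Adag) (hB : IsMoorePenrose B Bdag)
    (E : Matrix (Fin m) (Fin n) ℂ) (hE : E = B - A)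
    :
    frobSq (Bdag - Adag) ≤
      min
        (spec Adag ^ 2 * (frobSq (Adag * E) - frobSq (Adag * E * Bdag * B))
          + spec Bdag ^ 2 * (frobSq (E * Bdag) - frobSq (A * Adag * E * Bdag))
          + frobSq (Bdag * E * Adag))
        (spec Adag ^ 2 * (frobSq (E * Adag) - frobSq (B * Bdag * E * Adag))
          + spec Bdag ^ 2 * (frobSq (Bdag * E) - frobSq (Bdag * E * Adag * A))
          + frobSq (Adag * E * Bdag)) := by
  subst hE
  refine le_min (frobSq_pinv_sub_pinv_le hA hB) ?_
  have h := frobSq_pinv_sub_pinv_le hA.conjTranspose hB.conjTranspose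
  simp only [← conjTranspose_sub, ← Matrix.conjTranspose_mul, frobSq_conjTranspose,
    spec_conjTranspose, Matrix.mul_assoc] at h ⊢
  exact h
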